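/- Let M be a connected 2-level poset that is 2-CS-transitive and 3-CS-transitive, and suppose that for some a, b ∈ M with a < b there exists x ∈ M^D with a < x < b such that no element of M^D lies strictly between a and x and no element of M^D lies strictly between x and b. Then for all a' ∈ Min(M) and b' ∈ Max(M) with a' < b', every maximal chain of the interval [a',b']^{M^D} has exactly three elements. -/

import Mathlib

set_option autoImplicit false

section Preamble

/-- A *cut* of a poset `M`: a nonempty subset, bounded above, which equals the set of
lower bounds of its set of upper bounds. -/
def IsCut {M : Type*} [PartialOrder M] (J : Set M) : Prop :=
  J.Nonempty ∧ (upperBounds J).Nonempty ∧ lowerBounds (upperBounds J) = J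

/-- The Dedekind–MacNeille completion of `M`: the set of cuts, ordered by inclusion. -/
abbrev DMC (M : Type*) [PartialOrder M] : Type _ := {J : Set M // IsCut J}

/-- The canonical embedding of `M` into `DMC M`, `a ↦ {x | x ≤ a}`. -/
def principalCut {M : Type*} [PartialOrder M] (a : M) : DMC M :=
  ⟨Set.Iic a, ⟨a, le_refl a⟩, ⟨a, fun _ hx => hx⟩, by
    apply Set.Subset.antisymm
    · intro x hx
      exact hx (fun _ hy => hy)
    · exact subset_lowerBounds_upperBounds _⟩

/-- The image of `M` in its Dedekind–MacNeille completion (the principal cuts). -/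
def principalSet (M : Type*) [PartialOrder M] : Set (DMC M) :=
  Set.range (fun a : M => principalCut a)

/-- A 2-level poset: every element is minimal or maximal. -/
def IsTwoLevel (M : Type*) [PartialOrder M] : Prop :=
  ∀ x : M, IsMin x ∨ IsMax x

/-- The set `Min(M)` of minimal elements. -/
def minSet (M : Type*) [PartialOrder M] : Set M := {x | IsMin x}

/-- The set `Max(M)` of maximal elements. -/
def maxSet (M : Type*) [PartialOrder M] : Set M := {x | IsMax x}

/-- The comparability graph of a poset: `x` adjacent to `y` iff `x < y` or `y < x`. -/
def compGraph (M : Type*) [PartialOrder M] : SimpleGraph M where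
  Adj x y := x < y ∨ y < x
  symm := ⟨fun _ _ h => Or.symm h⟩
  loopless := ⟨fun x h => by rcases h with h | h <;> exact lt_irrefl x h⟩

/-- Upward ramification points of `M`: infima in `DMC M` of two incomparable elements of `M`. -/
def upRam (M : Type*) [PartialOrder M] : Set (DMC M) :=
  {p | ∃ a b : M, ¬ a ≤ b ∧ ¬ b ≤ a ∧ IsGLB {principalCut a, principalCut b} p}

/-- Downward ramification points of `M`: suprema in `DMC M` of two incomparable elements of `M`. -/
def downRam (M : Type*) [PartialOrder M] : Set (DMC M) :=
  {p | ∃ a b : M, ¬ a ≤ b ∧ ¬ b ≤ a ∧ IsLUB {principalCut a, principalCut b} p}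

/-- `M⁺ = M ∪ Ram(M)`, as a subset of `DMC M`. -/
def MPlus (M : Type*) [PartialOrder M] : Set (DMC M) :=
  principalSet M ∪ upRam M ∪ downRam M

/-- A 2-arc in a graph. -/
def IsTwoArc {V : Type*} (G : SimpleGraph V) (v₀ v₁ v₂ : V) : Prop :=
  G.Adj v₀ v₁ ∧ G.Adj v₁ v₂ ∧ v₀ ≠ v₂

/-- Local 1-arc-transitivity: every vertex stabilizer is transitive on neighbours. -/
def LocallyOneArcTransitive {V : Type*} (G : SimpleGraph V) : Prop :=
  ∀ v u w : V, G.Adj v u → G.Adj v w → ∃ g : G ≃g G, g v = v ∧ g u = w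

/-- Local 2-arc-transitivity: every vertex stabilizer is transitive on 2-arcs from that vertex. -/
def LocallyTwoArcTransitive {V : Type*} (G : SimpleGraph V) : Prop :=
  ∀ v u₁ w₁ u₂ w₂ : V, IsTwoArc G v u₁ w₁ → IsTwoArc G v u₂ w₂ →
    ∃ g : G ≃g G, g v = v ∧ g u₁ = u₂ ∧ g w₁ = w₂

/-- (Global) 1-arc-transitivity of a graph. -/
def OneArcTransitive {V : Type*} (G : SimpleGraph V) : Prop :=
  ∀ v₀ v₁ u₀ u₁ : V, G.Adj v₀ v₁ → G.Adj u₀ u₁ →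
    ∃ g : G ≃g G, g v₀ = u₀ ∧ g v₁ = u₁

/-- (Global) 2-arc-transitivity of a graph. -/
def TwoArcTransitive {V : Type*} (G : SimpleGraph V) : Prop :=
  ∀ v₀ v₁ v₂ u₀ u₁ u₂ : V, IsTwoArc G v₀ v₁ v₂ → IsTwoArc G u₀ u₁ u₂ →
    ∃ g : G ≃g G, g v₀ = u₀ ∧ g v₁ = u₁ ∧ g v₂ = u₂

/-- 3-CS-homogeneity: every isomorphism between connected 3-element induced subposets
extends to an automorphism. -/
def ThreeCSHomogeneous (M : Type*) [PartialOrder M] : Prop :=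
  ∀ A B : Set M, A.ncard = 3 → B.ncard = 3 →
    ((compGraph M).induce A).Connected → ((compGraph M).induce B).Connected →
    ∀ f : ↥A ≃o ↥B, ∃ g : M ≃o M, ∀ a : ↥A, g ↑a = ↑(f a)

/-- 2-CS-transitivity: the automorphism group is transitive on comparable pairs. -/
def TwoCSTransitive (M : Type*) [PartialOrder M] : Prop :=
  ∀ a b a' b' : M, a < b → a' < b' → ∃ g : M ≃o M, g a = a' ∧ g b = b'

/-- 3-CS-transitivity: for any two isomorphic connected 3-element induced subposets there
is an automorphism carrying one onto the other. -/
def ThreeCSTransitive (M : Type*) [PartialOrder M] : Prop :=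
  ∀ A B : Set M, A.ncard = 3 → B.ncard = 3 →
    ((compGraph M).induce A).Connected → ((compGraph M).induce B).Connected →
    Nonempty (↥A ≃o ↥B) → ∃ g : M ≃o M, ⇑g '' A = B

/-- A subset of a poset is a `k`-diamond if it consists of a least element, a greatest
element, and exactly `k` pairwise incomparable elements strictly in between. -/
def IsKDiamond {P : Type*} [PartialOrder P] (s : Set P) (k : ℕ) : Prop :=
  ∃ a b : P, a ∈ s ∧ b ∈ s ∧ a ≠ b ∧ (∀ z ∈ s, a ≤ z ∧ z ≤ b) ∧
    (s \ {a, b}).ncard = k ∧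
    ∀ z ∈ s \ ({a, b} : Set P), ∀ w ∈ s \ ({a, b} : Set P), z ≠ w → ¬ z ≤ w

end Preamble

/-!
A cut strictly between `a'` and `b'` contains `a'` and another element `d`, necessarily
minimal and below `b'`. The given cut `x` with `a ⋖ x ⋖ b` is generated by `a` and some
`e < b`, and 3-CS-transitivity carries the V-shaped triple `{a, e, b}` onto `{a', d, b'}`;
so the cut generated by `a'` and `d` is covered by `b'`, and no two cuts strictly between
`a'` and `b'` are comparable. Since 2-CS-transitivity moves `x` strictly between `a'` and `b'`,
a maximal chain of `[a', b']` consists of `a'`, `b'` and exactly one cut in between.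
-/

open Set

section MaximalChain

variable {P : Type*} [PartialOrder P]

theorem mem_of_forall_comparable_of_maximal {S C : Set P} (hCS : C ⊆ S)
    (hC : IsChain (· ≤ ·) C)
    (hmax : ∀ C' : Set P, C' ⊆ S → IsChain (· ≤ ·) C' → C ⊆ C' → C' = C)
    {z : P} (hz : z ∈ S) (hcomp : ∀ y ∈ C, z ≤ y ∨ y ≤ z) : z ∈ C := by
  rw [← hmax (insert z C) (insert_subset hz hCS) (hC.insert fun y hy _ => hcomp y hy)
    (subset_insert z C)]
  exact mem_insert z C

theorem ncard_eq_three_of_maximal_chain_Icc {p q m : P} (hm : m ∈ Ioo p q)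
    (hanti : IsAntichain (· ≤ ·) (Ioo p q)) {C : Set P} (hCS : C ⊆ Icc p q)
    (hC : IsChain (· ≤ ·) C)
    (hmax : ∀ C' : Set P, C' ⊆ Icc p q → IsChain (· ≤ ·) C' → C ⊆ C' → C' = C) :
    C.ncard = 3 := by
  have hpq : p < q := hm.1.trans hm.2
  have hp : p ∈ C := mem_of_forall_comparable_of_maximal hCS hC hmax
    (left_mem_Icc.2 hpq.le) fun y hy => Or.inl (hCS hy).1
  have hq : q ∈ C := mem_of_forall_comparable_of_maximal hCS hC hmax
    (right_mem_Icc.2 hpq.le) fun y hy => Or.inr (hCS hy).2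
  have hIoo : ∀ y ∈ C, y ≠ p → y ≠ q → y ∈ Ioo p q := fun y hy hyp hyq =>
    ⟨(hCS hy).1.lt_of_ne' hyp, (hCS hy).2.lt_of_ne hyq⟩
  obtain ⟨n, hnC, hn⟩ : ∃ n ∈ C, n ∈ Ioo p q := by
    by_contra! hC_end
    refine hC_end m (mem_of_forall_comparable_of_maximal hCS hC hmax
      (Ioo_subset_Icc_self hm) fun y hy => ?_) hm
    by_cases hyp : y = p
    · exact Or.inr (hyp ▸ hm.1.le)
    by_cases hyq : y = q
    · exact Or.inl (hyq ▸ hm.2.le)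
    exact absurd (hIoo y hy hyp hyq) (hC_end y hy)
  have hC_eq : C = {p, n, q} := by
    refine Subset.antisymm (fun y hy => ?_) (insert_subset hp (insert_subset hnC
      (singleton_subset_iff.2 hq)))
    by_cases hyp : y = p
    · exact Or.inl hyp
    by_cases hyq : y = q
    · exact Or.inr (Or.inr hyq)
    refine Or.inr (Or.inl (by_contra fun hyn => ?_))
    have hyI := hIoo y hy hyp hyq
    exact (hC hy hnC hyn).elim (hanti hyI hn hyn) (hanti hn hyI (Ne.symm hyn))
  rw [hC_eq, ncard_eq_three]
  exact ⟨p, n, q, hn.1.ne, hpq.ne, hn.2.ne, rfl⟩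

end MaximalChain

section Cuts

variable {M N : Type*} [PartialOrder M] [PartialOrder N]

theorem lowerBounds_upperBounds_subset_cut {S : Set M} {K : DMC M} (h : S ⊆ K.1) :
    lowerBounds (upperBounds S) ⊆ K.1 := by
  rw [← K.2.2.2]
  exact lowerBounds_mono_set (upperBounds_mono_set h)

theorem principalCut_le_iff {a : M} {K : DMC M} : principalCut a ≤ K ↔ a ∈ K.1 :=
  ⟨fun h => h (mem_Iic.2 le_rfl), fun h => by
    have := lowerBounds_upperBounds_subset_cut (singleton_subset_iff.2 h)
    rw [upperBounds_singleton, lowerBounds_Ici] at this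
    exact this⟩

theorem lt_of_mem_of_lt_principalCut {b y : M} {K : DMC M} (hK : K < principalCut b)
    (hy : y ∈ K.1) : y < b :=
  lt_of_le_of_ne (hK.le hy) (by rintro rfl; exact hK.not_ge (principalCut_le_iff.2 hy))

theorem exists_mem_not_le_of_principalCut_lt {a : M} {K : DMC M} (h : principalCut a < K) :
    ∃ e ∈ K.1, ¬ e ≤ a := by
  by_contra! h'
  exact h.not_ge h'

theorem upperBounds_lowerBounds_upperBounds (S : Set M) :
    upperBounds (lowerBounds (upperBounds S)) = upperBounds S :=
  gc_upperBounds_lowerBounds.l_u_l_eq_l S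

def cutClosure (S : Set M) (hS : S.Nonempty) (hub : (upperBounds S).Nonempty) : DMC M :=
  ⟨lowerBounds (upperBounds S), hS.mono (subset_lowerBounds_upperBounds S),
    by rwa [upperBounds_lowerBounds_upperBounds],
    by rw [upperBounds_lowerBounds_upperBounds]⟩

theorem exists_eq_lowerBounds_upperBounds_pair_of_covBy {a : M} {x : DMC M}
    (hax : principalCut a ⋖ x) :
    ∃ e ∈ x.1, ¬ e ≤ a ∧ x.1 = lowerBounds (upperBounds {a, e}) := by
  obtain ⟨e, hex, hea⟩ := exists_mem_not_le_of_principalCut_lt hax.lt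
  have hae : {a, e} ⊆ x.1 := pair_subset (principalCut_le_iff.1 hax.le) hex
  set X := cutClosure {a, e} (insert_nonempty a {e})
    (x.2.2.1.mono (upperBounds_mono_set hae))
  have hXx : X ≤ x := lowerBounds_upperBounds_subset_cut hae
  have haX : principalCut a < X := lt_of_le_not_ge
    (principalCut_le_iff.2 (subset_lowerBounds_upperBounds _ (mem_insert a {e})))
    fun h => hea (h (subset_lowerBounds_upperBounds _ (mem_insert_of_mem a rfl)))
  have hXeq : X = x := (hax.eq_or_eq haX.le hXx).resolve_left haX.ne'
  exact ⟨e, hex, hea, congrArg Subtype.val hXeq.symm⟩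

def cutImage (e : M ≃o N) (J : DMC M) : DMC N :=
  ⟨e '' J.1, J.2.1.image e, by rw [e.upperBounds_image]; exact J.2.2.1.image e,
    by rw [e.upperBounds_image, e.lowerBounds_image, J.2.2.2]⟩

def OrderIso.dmcCongr (e : M ≃o N) : DMC M ≃o DMC N where
  toFun := cutImage e
  invFun := cutImage e.symm
  left_inv J := Subtype.ext (e.symm_image_image J.1)
  right_inv J := Subtype.ext (e.image_symm_image J.1)
  map_rel_iff' := image_subset_image_iff e.injective

theorem OrderIso.dmcCongr_principalCut (e : M ≃o N) (a : M) :
    e.dmcCongr (principalCut a) = principalCut (e a) :=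
  Subtype.ext (e.image_Iic a)

end Cuts

section Vee

variable {α β : Type*} [PartialOrder α] [PartialOrder β]

def IsVee (p q r : α) : Prop := p < r ∧ q < r ∧ ¬ p ≤ q ∧ ¬ q ≤ p

theorem IsVee.isGreatest {p q r : α} (h : IsVee p q r) : IsGreatest {r, p, q} r := by
  refine ⟨mem_insert r _, ?_⟩
  rintro _ (rfl | rfl | rfl)
  exacts [le_rfl, h.1.le, h.2.1.le]

theorem IsVee.ncard_eq_three {p q r : α} (h : IsVee p q r) : ({r, p, q} : Set α).ncard = 3 :=
  Set.ncard_eq_three.2 ⟨r, p, q, h.1.ne', h.2.1.ne', fun hpq => h.2.2.1 hpq.le, rfl⟩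

theorem IsVee.connected_induce {p q r : α} (h : IsVee p q r) :
    ((compGraph α).induce ({r, p, q} : Set α)).Connected := by
  rw [SimpleGraph.connected_iff]
  refine ⟨?_, ⟨⟨r, mem_insert r _⟩⟩⟩
  have reach : ∀ z : ↥({r, p, q} : Set α),
      ((compGraph α).induce ({r, p, q} : Set α)).Reachable z ⟨r, mem_insert r _⟩ := by
    rintro ⟨z, rfl | rfl | rfl⟩
    · rfl
    · exact SimpleGraph.Adj.reachable (Or.inl h.1)
    · exact SimpleGraph.Adj.reachable (Or.inl h.2.1)
  exact fun y z => (reach y).trans (reach z).symm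

theorem IsVee.nonempty_orderIso {p q r : α} {p' q' r' : β} (h : IsVee p q r)
    (h' : IsVee p' q' r') : Nonempty (↥({r, p, q} : Set α) ≃o ↥({r', p', q'} : Set β)) := by
  classical
  obtain ⟨hpr, hqr, hpq, hqp⟩ := h
  obtain ⟨hpr', hqr', hpq', hqp'⟩ := h'
  have hne : p ≠ q ∧ q ≠ p ∧ r ≠ p ∧ r ≠ q :=
    ⟨fun e => hpq e.le, fun e => hqp e.le, hpr.ne', hqr.ne'⟩
  have hne' : p' ≠ q' ∧ q' ≠ p' ∧ r' ≠ p' ∧ r' ≠ q' :=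
    ⟨fun e => hpq' e.le, fun e => hqp' e.le, hpr'.ne', hqr'.ne'⟩
  refine ⟨{
    toFun := fun x => if x.1 = p then ⟨p', by simp⟩ else if x.1 = q then ⟨q', by simp⟩
      else ⟨r', by simp⟩
    invFun := fun x => if x.1 = p' then ⟨p, by simp⟩ else if x.1 = q' then ⟨q, by simp⟩
      else ⟨r, by simp⟩
    left_inv := ?_
    right_inv := ?_
    map_rel_iff' := ?_ }⟩
  all_goals
    simp only [Function.LeftInverse, Function.RightInverse, Subtype.forall, mem_insert_iff,
      mem_singleton_iff]
  · rintro x (rfl | rfl | rfl) <;> simp [hne, hne']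
  · rintro x (rfl | rfl | rfl) <;> simp [hne, hne']
  · rintro x (rfl | rfl | rfl) y (rfl | rfl | rfl) <;>
      simp [hne, hpq, hqp, hpq', hqp', hpr.le, hqr.le, hpr'.le, hqr'.le, hpr.not_ge,
        hqr.not_ge, hpr'.not_ge, hqr'.not_ge]

theorem ThreeCSTransitive.exists_orderIso_of_isVee {M : Type*} [PartialOrder M]
    (h3cs : ThreeCSTransitive M) {p q r p' q' r' : M} (h : IsVee p q r) (h' : IsVee p' q' r') :
    ∃ g : M ≃o M, g r = r' ∧ g '' {p, q} = {p', q'} := by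
  obtain ⟨g, hg⟩ := h3cs _ _ h.ncard_eq_three h'.ncard_eq_three h.connected_induce
    h'.connected_induce (h.nonempty_orderIso h')
  have hgr : g r = r' := by
    have := g.monotone.map_isGreatest h.isGreatest
    rw [hg] at this
    exact this.unique h'.isGreatest
  have hr : r ∉ ({p, q} : Set M) := by
    rintro (rfl | rfl)
    exacts [h.1.ne rfl, h.2.1.ne rfl]
  have hr' : r' ∉ ({p', q'} : Set M) := by
    rintro (rfl | rfl)
    exacts [h'.1.ne rfl, h'.2.1.ne rfl]
  refine ⟨g, hgr, ?_⟩
  rw [← insert_sdiff_self_of_notMem hr, image_sdiff g.injective, hg, image_singleton, hgr,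
    insert_sdiff_self_of_notMem hr']

theorem IsTwoLevel.isVee {M : Type*} [PartialOrder M] (h2lev : IsTwoLevel M) {p q r : M}
    (hpr : p < r) (hqr : q < r) (hqp : ¬ q ≤ p) : IsVee p q r := by
  have hq : IsMin q := (h2lev q).resolve_right fun hmax => hqr.not_ge (hmax hqr.le)
  exact ⟨hpr, hqr, fun hpq => hqp (hq hpq), hqp⟩

end Vee

theorem isAntichain_Ioo_principalCut {M : Type*} [PartialOrder M] (h2lev : IsTwoLevel M)
    (h3cs : ThreeCSTransitive M) {a b : M} {x : DMC M} (hab : a < b)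
    (hax : principalCut a ⋖ x) (hxb : x ⋖ principalCut b) {a' b' : M} (hab' : a' < b') :
    IsAntichain (· ≤ ·) (Ioo (principalCut a') (principalCut b')) := by
  intro z₁ hz₁ z₂ hz₂ hne hle
  obtain ⟨e, hex, hea, hx⟩ := exists_eq_lowerBounds_upperBounds_pair_of_covBy hax
  obtain ⟨d, hdz, hda⟩ := exists_mem_not_le_of_principalCut_lt hz₁.1
  obtain ⟨g, hgb, hg⟩ := h3cs.exists_orderIso_of_isVee
    (h2lev.isVee hab (lt_of_mem_of_lt_principalCut hxb.lt hex) hea)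
    (h2lev.isVee hab' (lt_of_mem_of_lt_principalCut hz₁.2 hdz) hda)
  have hcov : g.dmcCongr x ⋖ principalCut b' := by
    rw [← hgb, ← g.dmcCongr_principalCut]
    exact (apply_covBy_apply_iff g.dmcCongr).2 hxb
  have hle₁ : g.dmcCongr x ≤ z₁ := by
    change g '' x.1 ⊆ z₁.1
    rw [hx, ← g.lowerBounds_image, ← g.upperBounds_image, hg]
    exact lowerBounds_upperBounds_subset_cut (pair_subset (principalCut_le_iff.1 hz₁.1.le) hdz)
  exact hcov.2 (hle₁.trans_lt (lt_of_le_of_ne hle hne)) hz₂.2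

theorem maximal_chains_length_three_general (M : Type*) [PartialOrder M]
    (h2lev : IsTwoLevel M)
    (h2cs : TwoCSTransitive M) (h3cs : ThreeCSTransitive M)
    (hex : ∃ (a b : M) (x : DMC M), a < b ∧ principalCut a ⋖ x ∧ x ⋖ principalCut b) :
    ∀ a' b' : M, a' ∈ minSet M → b' ∈ maxSet M → a' < b' →
      ∀ C : Set (DMC M), C ⊆ Set.Icc (principalCut a') (principalCut b') →
        IsChain (· ≤ ·) C →
        (∀ C' : Set (DMC M), C' ⊆ Set.Icc (principalCut a') (principalCut b') →
          IsChain (· ≤ ·) C' → C ⊆ C' → C' = C) →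
        C.ncard = 3 := by
  intro a' b' _ _ hab' C hCS hC hmax
  obtain ⟨a, b, x, hab, hax, hxb⟩ := hex
  obtain ⟨g, rfl, rfl⟩ := h2cs a b a' b' hab hab'
  have hmid : g.dmcCongr x ∈ Ioo (principalCut (g a)) (principalCut (g b)) := by
    rw [← g.dmcCongr_principalCut, ← g.dmcCongr_principalCut]
    exact ⟨g.dmcCongr.strictMono hax.lt, g.dmcCongr.strictMono hxb.lt⟩
  exact ncard_eq_three_of_maximal_chain_Icc hmid
    (isAntichain_Ioo_principalCut h2lev h3cs hab hax hxb hab') hCS hC hmax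

/-- Lemma 4.3. Let `M` be a connected 2- and 3-CS-transitive 2-level poset
such that for some `a < b` in `M` there is `x ∈ M^D` with `a ⋖ x ⋖ b`. Then every maximal
chain of every completion interval `[a',b']` (`a'` minimal, `b'` maximal, `a' < b'`) has
exactly three elements. -/
theorem maximal_chains_length_three (M : Type*) [PartialOrder M]
    (h2lev : IsTwoLevel M)
    (hconn : (compGraph M).Connected)
    (h2cs : TwoCSTransitive M) (h3cs : ThreeCSTransitive M)
    (hex : ∃ (a b : M) (x : DMC M), a < b ∧ principalCut a ⋖ x ∧ x ⋖ principalCut b) :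
    ∀ a' b' : M, a' ∈ minSet M → b' ∈ maxSet M → a' < b' →
      ∀ C : Set (DMC M), C ⊆ Set.Icc (principalCut a') (principalCut b') →
        IsChain (· ≤ ·) C →
        (∀ C' : Set (DMC M), C' ⊆ Set.Icc (principalCut a') (principalCut b') →
          IsChain (· ≤ ·) C' → C ⊆ C' → C' = C) →
        C.ncard = 3 :=
  maximal_chains_length_three_general M h2lev h2cs h3cs hex
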